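/- arXiv:1702.03101 — 2 statements merged into one kernel-verified Lean document; each statement's English description precedes it below -/
import Mathlib

section
/- For any BAN F: B^n → B^n and any block-sequential update schedule W on V = {0,...,n-1}, there exists a BAN F' on n+k automata with k = ⌈log₂(χ(G_NECC(F,W)))⌉ and an update schedule W' extending W (preserving its order on V) such that (F',W') id-simulates (F,[V]). Hence κ(F,W) ≤ ⌈log₂(χ(G_NECC(F,W)))⌉. -/
/-- A configuration of a Boolean automata network of size `n`. -/
abbrev Conf (n : ℕ) := Fin n → Bool

/-- `F_I`: update simultaneously exactly the automata in `I`. -/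
def updSet {n : ℕ} (F : Conf n → Conf n) (I : Finset (Fin n)) (x : Conf n) : Conf n :=
  fun i => if i ∈ I then F x i else x i

/-- `W_{<j}`: union of the first `j` blocks of the schedule `W`. -/
def prefUnion {n : ℕ} (W : List (Finset (Fin n))) (j : ℕ) : Finset (Fin n) :=
  (W.take j).foldr (· ∪ ·) ∅

/-- `W` is a block-sequential update schedule: an ordered partition of the automata. -/
def isSchedule {n : ℕ} (W : List (Finset (Fin n))) : Prop :=
  (∀ B ∈ W, B.Nonempty) ∧ W.Pairwise Disjoint ∧ W.foldr (· ∪ ·) ∅ = Finset.univ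

/-- Confusable configurations: identical after updating the first `i` blocks, some `i ∈ [0,p]`. -/
def confusable {n : ℕ} (F : Conf n → Conf n) (W : List (Finset (Fin n))) (x x' : Conf n) : Prop :=
  ∃ i ≤ W.length, updSet F (prefUnion W i) x = updSet F (prefUnion W i) x'

/-- `CC(x,x')`: the set of steps making `x` and `x'` confusable. -/
def CCset {n : ℕ} (F : Conf n → Conf n) (W : List (Finset (Fin n))) (x x' : Conf n) : Set ℕ :=
  {i | i ≤ W.length ∧ updSet F (prefUnion W i) x = updSet F (prefUnion W i) x'}

/-- The `G_NECC` graph: edges between non-equivalent confusable configurations. -/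
def gnecc {n : ℕ} (F : Conf n → Conf n) (W : List (Finset (Fin n))) :
    SimpleGraph (Conf n) where
  Adj x x' := F x ≠ F x' ∧ confusable F W x x'
  symm := ⟨by
    rintro x x' ⟨hne, i, hi, h⟩
    exact ⟨hne.symm, i, hi, h.symm⟩⟩
  loopless := ⟨by rintro x ⟨hne, _⟩; exact hne rfl⟩

/-- `F^W`: apply the blocks of `W` sequentially. -/
def runSched {n : ℕ} (F : Conf n → Conf n) (W : List (Finset (Fin n))) (x : Conf n) : Conf n :=
  W.foldl (fun y B => updSet F B y) x

/-- `W(i)`: the index of the block of `W` containing `i`. -/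
def stepOf {n : ℕ} (W : List (Finset (Fin n))) (i : Fin n) : ℕ :=
  W.findIdx (fun B => decide (i ∈ B))

/-- `W' ∈ E_h(W,V')`: `W'` extends `W`, preserving the update order via `h`. -/
def extendsSched {n m : ℕ} (W : List (Finset (Fin n))) (W' : List (Finset (Fin m)))
    (h : Fin n → Fin m) : Prop :=
  ∀ i i' : Fin n, (stepOf W i ≤ stepOf W i' ↔ stepOf W' (h i) ≤ stepOf W' (h i'))

/-- `(F',W')` `h`-simulates `(F,[V])`: `φ_h ∘ F'^{W'} = F ∘ φ_h`. -/
def simulates {n m : ℕ} (F' : Conf m → Conf m) (W' : List (Finset (Fin m)))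
    (F : Conf n → Conf n) (h : Fin n → Fin m) : Prop :=
  ∀ z : Conf m, (fun i => runSched F' W' z (h i)) = F (fun i => z (h i))

/-- `κ(F,W)`: minimal number of additional automata needed to simulate `(F,[V])`
with a schedule extending `W` order-preservingly. -/
noncomputable def kappa {n : ℕ} (F : Conf n → Conf n) (W : List (Finset (Fin n))) : ℕ :=
  sInf {k | ∃ h : Fin n → Fin (n + k), Function.Injective h ∧
    ∃ W' : List (Finset (Fin (n + k))), isSchedule W' ∧ extendsSched W W' h ∧
      ∃ F' : Conf (n + k) → Conf (n + k), simulates F' W' F h}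

/-- The simple sequential update schedule `({0},{1},…,{n-1})`. -/
def seqSched (n : ℕ) : List (Finset (Fin n)) := (List.finRange n).map (fun i => {i})


/-!
Colour `G_NECC(F,W)` properly with binary words of length `k = ⌈log₂ χ⌉` and add `k` automata
that, in a first block, store the colour of the initial configuration `x`. An automaton `i` of
`V` is updated right after the blocks before its own, when the visible part of the network is
`F_{W_{<j}}(x)` with `j = W(i)`; it then picks any `x₀` of the same colour with
`F_{W_{<j}}(x₀) = F_{W_{<j}}(x)` and outputs `F(x₀)_i`. Such an `x₀` is confusable with `x`, so
properness of the colouring forces `F(x₀) = F(x)`.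
-/

open Finset Function

theorem mem_foldr_union {α : Type*} [DecidableEq α] {l : List (Finset α)} {a : α} :
    a ∈ l.foldr (· ∪ ·) ∅ ↔ ∃ B ∈ l, a ∈ B := by
  induction l with
  | nil => simp
  | cons B l ih => simp [ih]

theorem SimpleGraph.nonempty_coloring_clog {V : Type*} [Finite V] (G : SimpleGraph V) :
    Nonempty (G.Coloring (Fin (Nat.clog 2 G.chromaticNumber.toNat) → Bool)) := by
  obtain ⟨C⟩ := G.colorable_chromaticNumber_of_fintype
  have hcard : Fintype.card (Fin G.chromaticNumber.toNat) ≤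
      Fintype.card (Fin (Nat.clog 2 G.chromaticNumber.toNat) → Bool) := by
    simpa using Nat.le_pow_clog one_lt_two _
  obtain ⟨f⟩ := Function.Embedding.nonempty_of_card_le hcard
  exact ⟨(SimpleGraph.Embedding.completeGraph f).toHom.comp C⟩

section Schedules

variable {n : ℕ}

theorem updSet_empty (F : Conf n → Conf n) (x : Conf n) : updSet F ∅ x = x := by
  funext i; simp [updSet]

theorem updSet_univ (F : Conf n → Conf n) (x : Conf n) : updSet F univ x = F x := by
  funext i; simp [updSet]

theorem runSched_append (F : Conf n → Conf n) (W₁ W₂ : List (Finset (Fin n))) (x : Conf n) :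
    runSched F (W₁ ++ W₂) x = runSched F W₂ (runSched F W₁ x) :=
  List.foldl_append

theorem runSched_take_succ (F : Conf n → Conf n) (W : List (Finset (Fin n))) {j : ℕ}
    (hj : j < W.length) (x : Conf n) :
    runSched F (W.take (j + 1)) x = updSet F W[j] (runSched F (W.take j) x) := by
  rw [List.take_add_one, runSched_append, List.getElem?_eq_getElem hj]
  rfl

theorem prefUnion_succ (W : List (Finset (Fin n))) {j : ℕ} (hj : j < W.length) :
    prefUnion W (j + 1) = prefUnion W j ∪ W[j] := by
  ext i
  simp only [prefUnion, mem_foldr_union, List.take_add_one, List.getElem?_eq_getElem hj,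
    Option.toList_some, List.mem_append, List.mem_singleton, mem_union]
  grind

theorem isSchedule.prefUnion_length {W : List (Finset (Fin n))} (hW : isSchedule W) :
    prefUnion W W.length = univ := by
  rw [prefUnion, List.take_length]
  exact hW.2.2

theorem stepOf_eq_of_mem {W : List (Finset (Fin n))} (hd : W.Pairwise Disjoint) {j : ℕ}
    (hj : j < W.length) {i : Fin n} (hi : i ∈ W[j]) : stepOf W i = j := by
  rw [stepOf, List.findIdx_eq hj]
  refine ⟨decide_eq_true hi, fun j' hj' => decide_eq_false fun hi' => ?_⟩
  exact disjoint_left.mp (List.pairwise_iff_getElem.mp hd j' j _ hj hj') hi' hi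

theorem stepOf_map_image {m : ℕ} {f : Fin n → Fin m} (hf : Injective f)
    (W : List (Finset (Fin n))) (i : Fin n) :
    stepOf (W.map (image f)) (f i) = stepOf W i := by
  simp [stepOf, Function.comp_def, hf.mem_finset_image]

end Schedules

section Extension

variable {n k : ℕ}

def extraBlock (n k : ℕ) : Finset (Fin (n + k)) := univ.image (Fin.natAdd n)

-- Blocks of a schedule are nonempty, so the colour block is dropped when `k = 0`.
def extraBlocks (n k : ℕ) : List (Finset (Fin (n + k))) :=
  if k = 0 then [] else [extraBlock n k]

def extSched (W : List (Finset (Fin n))) (k : ℕ) : List (Finset (Fin (n + k))) :=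
  extraBlocks n k ++ W.map (image (Fin.castAdd k))

theorem Fin.castAdd_ne_natAdd (i : Fin n) (e : Fin k) : Fin.castAdd k i ≠ Fin.natAdd n e := by
  rw [Ne, Fin.ext_iff, Fin.val_castAdd, Fin.val_natAdd]
  omega

theorem natAdd_notMem_image_castAdd (e : Fin k) (B : Finset (Fin n)) :
    Fin.natAdd n e ∉ B.image (Fin.castAdd k) := by
  simpa using fun i _ => Fin.castAdd_ne_natAdd i e

theorem natAdd_mem_extraBlock (e : Fin k) : Fin.natAdd n e ∈ extraBlock n k :=
  mem_image_of_mem _ (mem_univ e)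

theorem castAdd_notMem_extraBlock (i : Fin n) : Fin.castAdd k i ∉ extraBlock n k := by
  simpa [extraBlock, eq_comm] using Fin.castAdd_ne_natAdd i

theorem runSched_extraBlocks (F : Conf (n + k) → Conf (n + k)) (z : Conf (n + k)) :
    runSched F (extraBlocks n k) z = updSet F (extraBlock n k) z := by
  unfold extraBlocks
  split_ifs with hk
  · subst hk
    simp [runSched, extraBlock, updSet_empty]
  · rfl

theorem stepOf_extSched (W : List (Finset (Fin n))) (i : Fin n) :
    stepOf (extSched W k) (Fin.castAdd k i) = (extraBlocks n k).length + stepOf W i := by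
  have hextra : (extraBlocks n k).findIdx (fun B => decide (Fin.castAdd k i ∈ B)) =
      (extraBlocks n k).length := by
    refine List.findIdx_eq_length_of_false fun B hB => decide_eq_false ?_
    unfold extraBlocks at hB
    split_ifs at hB
    · simp at hB
    · rw [List.mem_singleton.mp hB]
      exact castAdd_notMem_extraBlock i
  rw [stepOf, extSched, List.findIdx_append, hextra, if_neg (lt_irrefl _), ← stepOf,
    stepOf_map_image (Fin.castAdd_injective n k), add_comm]

theorem extSched_extends (W : List (Finset (Fin n))) :
    extendsSched W (extSched W k) (Fin.castAdd k) := by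
  intro i i'
  simp [stepOf_extSched]

theorem isSchedule.extSched {W : List (Finset (Fin n))} (hW : isSchedule W) :
    isSchedule (extSched W k) := by
  obtain ⟨hne, hdisj, huniv⟩ := hW
  have hextra : ∀ B ∈ extraBlocks n k, k ≠ 0 ∧ B = extraBlock n k := by
    unfold extraBlocks
    split_ifs with hk <;> simp [hk]
  refine ⟨fun B hB => ?_, ?_, ?_⟩
  · rcases List.mem_append.mp hB with hB | hB
    · obtain ⟨hk, rfl⟩ := hextra B hB
      exact ⟨_, natAdd_mem_extraBlock ⟨0, Nat.pos_of_ne_zero hk⟩⟩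
    · obtain ⟨B', hB', rfl⟩ := List.mem_map.mp hB
      exact (hne B' hB').image _
  · refine List.pairwise_append.mpr ⟨?_, ?_, ?_⟩
    · unfold extraBlocks
      split_ifs <;> simp
    · exact hdisj.map _ fun A B hAB => (disjoint_image (Fin.castAdd_injective n k)).mpr hAB
    · intro A hA B hB
      obtain ⟨-, rfl⟩ := hextra A hA
      obtain ⟨B', -, rfl⟩ := List.mem_map.mp hB
      refine disjoint_left.mpr fun v hv => ?_
      obtain ⟨e, -, rfl⟩ := mem_image.mp hv
      exact natAdd_notMem_image_castAdd e B'
  · refine eq_univ_of_forall fun v => mem_foldr_union.mpr ?_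
    refine Fin.addCases (fun i => ?_) (fun e => ?_) v
    · obtain ⟨B, hB, hi⟩ := mem_foldr_union.mp (huniv ▸ mem_univ i)
      exact ⟨_, List.mem_append_right _ (List.mem_map_of_mem hB), mem_image_of_mem _ hi⟩
    · have hk : k ≠ 0 := Nat.pos_iff_ne_zero.mp e.pos
      exact ⟨_, List.mem_append_left _ (by simp [extraBlocks, hk]), natAdd_mem_extraBlock e⟩

end Extension

section Simulation

variable {n k : ℕ} {F : Conf n → Conf n} {W : List (Finset (Fin n))}

theorem eq_of_confusable_of_coloring_eq {α : Type*} (C : (gnecc F W).Coloring α)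
    {x x' : Conf n} (hconf : confusable F W x x') (hC : C x = C x') : F x = F x' := by
  by_contra hne
  exact C.valid ⟨hne, hconf⟩ hC

open Classical in
noncomputable def simNet (F : Conf n → Conf n) (W : List (Finset (Fin n)))
    (c : Conf n → Conf k) (z : Conf (n + k)) : Conf (n + k) :=
  Fin.append
    (fun i =>
      if h : ∃ x₀, c x₀ = (fun e => z (Fin.natAdd n e)) ∧
          updSet F (prefUnion W (stepOf W i)) x₀ = (fun i' => z (Fin.castAdd k i'))
      then F h.choose i else z (Fin.castAdd k i))
    (c fun i => z (Fin.castAdd k i))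

def simState (F : Conf n → Conf n) (W : List (Finset (Fin n))) (c : Conf n → Conf k)
    (x : Conf n) (j : ℕ) : Conf (n + k) :=
  Fin.append (updSet F (prefUnion W j) x) (c x)

theorem updSet_simNet_extraBlock (c : Conf n → Conf k) (z : Conf (n + k)) :
    updSet (simNet F W c) (extraBlock n k) z =
      simState F W c (fun i => z (Fin.castAdd k i)) 0 := by
  funext v
  refine Fin.addCases (fun i => ?_) (fun e => ?_) v
  · simp [updSet, castAdd_notMem_extraBlock, simState, prefUnion]
  · simp [updSet, natAdd_mem_extraBlock, simState, simNet]

theorem simNet_simState_castAdd (C : (gnecc F W).Coloring (Conf k)) (x : Conf n) (i : Fin n) :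
    simNet F W C (simState F W C x (stepOf W i)) (Fin.castAdd k i) = F x i := by
  have hx : ∃ x₀, C x₀ = C x ∧
      updSet F (prefUnion W (stepOf W i)) x₀ = updSet F (prefUnion W (stepOf W i)) x :=
    ⟨x, rfl, rfl⟩
  simp only [simNet, simState, Fin.append_left, Fin.append_right]
  rw [dif_pos hx]
  obtain ⟨hC, hupd⟩ := hx.choose_spec
  exact congrFun (eq_of_confusable_of_coloring_eq C ⟨_, List.findIdx_le_length, hupd⟩ hC) i

theorem updSet_simNet_simState (hd : W.Pairwise Disjoint) (C : (gnecc F W).Coloring (Conf k))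
    (x : Conf n) {j : ℕ} (hj : j < W.length) :
    updSet (simNet F W C) (W[j].image (Fin.castAdd k)) (simState F W C x j) =
      simState F W C x (j + 1) := by
  funext v
  refine Fin.addCases (fun i => ?_) (fun e => ?_) v
  · by_cases hi : i ∈ W[j]
    · have hstep := stepOf_eq_of_mem hd hj hi
      rw [updSet, if_pos (mem_image_of_mem _ hi), ← hstep, simNet_simState_castAdd, hstep]
      simp [simState, updSet, prefUnion_succ W hj, hi]
    · simp [updSet, (Fin.castAdd_injective n k).mem_finset_image, hi, simState,
        prefUnion_succ W hj]
  · simp only [updSet, natAdd_notMem_image_castAdd, if_false]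
    simp [simState]

theorem runSched_simNet_take (hd : W.Pairwise Disjoint) (C : (gnecc F W).Coloring (Conf k))
    (x : Conf n) {j : ℕ} (hj : j ≤ W.length) :
    runSched (simNet F W C) ((W.map (image (Fin.castAdd k))).take j) (simState F W C x 0) =
      simState F W C x j := by
  induction j with
  | zero => rfl
  | succ j ih =>
    rw [runSched_take_succ _ _ (by simpa using hj), ih (by omega), List.getElem_map]
    exact updSet_simNet_simState hd C x hj

theorem simNet_simulates (hW : isSchedule W) (C : (gnecc F W).Coloring (Conf k)) :
    simulates (simNet F W C) (extSched W k) F (Fin.castAdd k) := by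
  intro z
  have hrun := runSched_simNet_take hW.2.1 C (fun i => z (Fin.castAdd k i)) le_rfl
  rw [List.take_of_length_le (by simp)] at hrun
  rw [extSched, runSched_append, runSched_extraBlocks, updSet_simNet_extraBlock, hrun]
  funext i
  simp [simState, hW.prefUnion_length, updSet_univ]

end Simulation

theorem stmt1 {n : ℕ} (F : Conf n → Conf n) (W : List (Finset (Fin n)))
    (hW : isSchedule W) (k : ℕ)
    (hk : k = Nat.clog 2 ((gnecc F W).chromaticNumber.toNat)) :
    (∃ W' : List (Finset (Fin (n + k))), isSchedule W' ∧
        extendsSched W W' (Fin.castAdd k) ∧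
        ∃ F' : Conf (n + k) → Conf (n + k), simulates F' W' F (Fin.castAdd k)) ∧
    kappa F W ≤ k := by
  obtain ⟨C⟩ : Nonempty ((gnecc F W).Coloring (Conf k)) :=
    hk ▸ (gnecc F W).nonempty_coloring_clog
  have hsim : ∃ W' : List (Finset (Fin (n + k))), isSchedule W' ∧
      extendsSched W W' (Fin.castAdd k) ∧
      ∃ F' : Conf (n + k) → Conf (n + k), simulates F' W' F (Fin.castAdd k) :=
    ⟨extSched W k, hW.extSched, extSched_extends W, simNet F W C, simNet_simulates hW C⟩
  exact ⟨hsim, Nat.sInf_le ⟨Fin.castAdd k, Fin.castAdd_injective n k, hsim⟩⟩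
end

section
/- Let F: B^n → B^n with the simple sequential schedule W = ({0},...,{n-1}). For all x ∈ B^n, |{F(x') : (x,x') ∈ NECC}| ≤ 2^{⌈n/2⌉+1} − 2. -/
/-!
Put `k = ⌈n/2⌉`. Under the sequential schedule, `x` and `x'` are confusable at step `i` exactly
when `F x` and `F x'` agree on the coordinates `< i` and `x` and `x'` agree on the coordinates `≥ i`.
So an image `F x'` of a neighbour either agrees with `F x` on the first `k` coordinates (at most
`2 ^ (n - k)` values), or is the image of a configuration agreeing with `x` on the coordinates `≥ k`
(at most `2 ^ k` values). `F x` itself lies in both classes but is not the image of a neighbour,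
which saves `2`.
-/

open Set

theorem List.mem_foldr_union_iff {α : Type*} [DecidableEq α] (L : List (Finset α)) (a : α) :
    a ∈ L.foldr (· ∪ ·) ∅ ↔ ∃ B ∈ L, a ∈ B := by
  induction L with
  | nil => simp
  | cons B L ih => simp [ih]

theorem mem_prefUnion_seqSched {n : ℕ} (i : ℕ) (j : Fin n) :
    j ∈ prefUnion (seqSched n) i ↔ (j : ℕ) < i := by
  simp only [prefUnion, seqSched, ← List.map_take, List.mem_foldr_union_iff, List.mem_map,
    exists_exists_and_eq_and, Finset.mem_singleton, exists_eq_right', List.mem_take_iff_getElem]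
  simp [Fin.ext_iff]

theorem confusable_seqSched_iff {n : ℕ} {F : Conf n → Conf n} {x x' : Conf n} :
    confusable F (seqSched n) x x' ↔
      ∃ i ≤ n, EqOn (F x) (F x') {j | (j : ℕ) < i} ∧ EqOn x x' {j | i ≤ (j : ℕ)} := by
  simp only [confusable, funext_iff, updSet, mem_prefUnion_seqSched]
  simp only [seqSched, List.length_map, List.length_finRange]
  refine exists_congr fun i => and_congr_right fun _ => ⟨fun h => ⟨fun j hj => ?_, fun j hj => ?_⟩, ?_⟩
  · simpa [show (j : ℕ) < i from hj] using h j
  · simpa [not_lt.2 (show i ≤ (j : ℕ) from hj)] using h j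
  · rintro ⟨hlow, hhigh⟩ j
    split_ifs with hj
    exacts [hlow hj, hhigh (not_lt.1 hj)]

theorem ncard_setOf_eqOn_le {ι β : Type*} [Finite ι] [Finite β] (c : ι → β) (s : Set ι) :
    {y | EqOn y c s}.ncard ≤ Nat.card β ^ Nat.card ↥sᶜ := by
  rw [← Nat.card_fun, ← Set.ncard_univ]
  refine ncard_le_ncard_of_injOn (fun y => sᶜ.domRestrict y) (fun _ _ => mem_univ _) ?_ (toFinite _)
  intro y hy y' hy' h
  funext j
  by_cases hj : j ∈ s
  · exact (hy hj).trans (hy' hj).symm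
  · exact congrFun h ⟨j, hj⟩

theorem Fin.natCard_setOf_val_lt (n k : ℕ) : Nat.card {j : Fin n | (j : ℕ) < k} = min n k := by
  simp [Nat.card_eq_fintype_card, Fintype.card_ofFinset, Fin.card_filter_val_lt]

theorem Fin.natCard_compl_setOf_val_lt (n k : ℕ) :
    Nat.card ↥({j : Fin n | (j : ℕ) < k}ᶜ) = n - k := by
  rw [Nat.card_eq_fintype_card, Fintype.card_compl_set, Fintype.card_fin,
    ← Nat.card_eq_fintype_card, Fin.natCard_setOf_val_lt]
  omega

theorem Fin.natCard_compl_setOf_le_val (n k : ℕ) :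
    Nat.card ↥({j : Fin n | k ≤ (j : ℕ)}ᶜ) = min n k := by
  simp only [compl_ofPred, not_le, Fin.natCard_setOf_val_lt]

theorem eqOn_or_eqOn_of_confusable_seqSched {n : ℕ} {F : Conf n → Conf n} {x x' : Conf n}
    (k : ℕ) (h : confusable F (seqSched n) x x') :
    EqOn (F x) (F x') {j | (j : ℕ) < k} ∨ EqOn x x' {j | k ≤ (j : ℕ)} := by
  obtain ⟨i, -, hlow, hhigh⟩ := confusable_seqSched_iff.1 h
  rcases le_total k i with hki | hik
  · exact .inl <| hlow.mono fun j (hj : (j : ℕ) < k) => hj.trans_le hki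
  · exact .inr <| hhigh.mono fun j (hj : k ≤ (j : ℕ)) => hik.trans hj

theorem Set.ncard_add_two_le_of_subset_union {α : Type*} [Finite α] {S A B : Set α} {a : α}
    (hS : S ⊆ A ∪ B) (haA : a ∈ A) (haB : a ∈ B) (haS : a ∉ S) :
    S.ncard + 2 ≤ A.ncard + B.ncard := by
  have hlt : S.ncard < (A ∪ B).ncard :=
    ncard_lt_ncard ((ssubset_iff_of_subset hS).2 ⟨a, .inl haA, haS⟩)
  have hinter : 0 < (A ∩ B).ncard := (ncard_pos).2 ⟨a, haA, haB⟩
  have := ncard_union_add_ncard_inter A B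
  omega

theorem gnecc_seqSched_image_subset {n : ℕ} (F : Conf n → Conf n) (x : Conf n) (k : ℕ) :
    {y | ∃ x', (gnecc F (seqSched n)).Adj x x' ∧ F x' = y} ⊆
      {y | EqOn y (F x) {j | (j : ℕ) < k}} ∪ F '' {z | EqOn z x {j | k ≤ (j : ℕ)}} := by
  rintro _ ⟨x', ⟨-, hconf⟩, rfl⟩
  rcases eqOn_or_eqOn_of_confusable_seqSched k hconf with h | h
  · exact .inl h.symm
  · exact .inr ⟨x', h.symm, rfl⟩

theorem stmt15 {n : ℕ} (F : Conf n → Conf n) (x : Conf n) :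
    {y : Conf n | ∃ x', (gnecc F (seqSched n)).Adj x x' ∧ F x' = y}.ncard ≤
      2 ^ ((n + 1) / 2 + 1) - 2 := by
  set k := (n + 1) / 2
  have hcount := ncard_add_two_le_of_subset_union (gnecc_seqSched_image_subset F x k)
    (eqOn_refl _ _) ⟨x, eqOn_refl _ _, rfl⟩ fun ⟨_, ⟨hne, _⟩, hx'⟩ => hne hx'.symm
  have hlow : {y : Conf n | EqOn y (F x) {j | (j : ℕ) < k}}.ncard ≤ 2 ^ (n - k) := by
    have := ncard_setOf_eqOn_le (F x) {j : Fin n | (j : ℕ) < k}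
    rwa [Fin.natCard_compl_setOf_val_lt, Nat.card_eq_fintype_card, Fintype.card_bool] at this
  have hhigh : (F '' {z : Conf n | EqOn z x {j | k ≤ (j : ℕ)}}).ncard ≤ 2 ^ min n k := by
    refine (ncard_image_le (toFinite _)).trans ?_
    have := ncard_setOf_eqOn_le x {j : Fin n | k ≤ (j : ℕ)}
    rwa [Fin.natCard_compl_setOf_le_val, Nat.card_eq_fintype_card, Fintype.card_bool] at this
  have : 2 ^ (n - k) ≤ 2 ^ k := Nat.pow_le_pow_right two_pos (by omega)
  have : 2 ^ min n k ≤ 2 ^ k := Nat.pow_le_pow_right two_pos (min_le_right _ _)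
  rw [pow_succ]
  omega
end
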